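/- arXiv:1702.01557 — 4 statements merged into one kernel-verified Lean document; each statement's English description precedes it below -/
import Mathlib

section
/- Two effects e and f are coexistent if and only if there exist effects g₁, g₂, g₃ ∈ E with g₁ + g₂ = e, g₁ + g₃ = f, and g₁ + g₂ + g₃ ≤ u (pointwise on S). -/
/-! An observable `G` with `e = ∑_{I_e} G` and `f = ∑_{I_f} G` yields the three effects
`∑_{I_e ∩ I_f} G`, `∑_{I_e \ I_f} G`, `∑_{I_f \ I_e} G`, whose total is `∑_{I_e ∪ I_f} G ≤ u`.
Conversely, `g₁, g₂, g₃` together with the remainder `u - (g₁ + g₂ + g₃)` form an observable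
from which `e = g₁ + g₂` and `f = g₁ + g₃` are coarse-grainings. -/

open Finset

theorem AffineMap.finset_sum_apply {k V₁ P₁ V₂ ι : Type*} [Ring k] [AddCommGroup V₁]
    [Module k V₁] [AddTorsor V₁ P₁] [AddCommGroup V₂] [Module k V₂]
    (s : Finset ι) (G : ι → P₁ →ᵃ[k] V₂) (p : P₁) :
    (∑ i ∈ s, G i) p = ∑ i ∈ s, G i p := by
  classical
  induction s using Finset.induction_on with
  | empty => rfl
  | insert a s ha ih => rw [sum_insert ha, sum_insert ha, AffineMap.coe_add, Pi.add_apply, ih]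

theorem Finset.sum_inter_add_sum_sdiff_add_sum_sdiff {ι M : Type*} [AddCommMonoid M]
    [DecidableEq ι] (s t : Finset ι) (f : ι → M) :
    ∑ i ∈ s ∩ t, f i + ∑ i ∈ s \ t, f i + ∑ i ∈ t \ s, f i = ∑ i ∈ s ∪ t, f i := by
  rw [sum_inter_add_sum_sdiff, ← sum_union disjoint_sdiff, union_sdiff_self_eq_union]

section Effects

variable {V P : Type*} [AddCommGroup V] [Module ℝ V] [AddTorsor V P]

def effects (S : Set P) : Set (P →ᵃ[ℝ] ℝ) := {f | ∀ p ∈ S, 0 ≤ f p ∧ f p ≤ 1}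

variable {S : Set P}

theorem sum_mem_effects_of_sum_eq_one {ι : Type*} [Fintype ι] {G : ι → P →ᵃ[ℝ] ℝ}
    (hG : ∀ i, G i ∈ effects S) (hsum : ∑ i, G i = AffineMap.const ℝ P 1) (s : Finset ι) :
    ∑ i ∈ s, G i ∈ effects S := by
  intro p hp
  have hnonneg : ∀ i, 0 ≤ G i p := fun i => (hG i p hp).1
  have htotal : ∑ i, G i p = 1 := by rw [← AffineMap.finset_sum_apply, hsum]; rfl
  rw [AffineMap.finset_sum_apply]
  exact ⟨sum_nonneg fun i _ => hnonneg i, htotal ▸ sum_le_univ_sum_of_nonneg hnonneg⟩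

theorem const_one_sub_mem_effects {g : P →ᵃ[ℝ] ℝ} (hg : g ∈ effects S) :
    AffineMap.const ℝ P 1 - g ∈ effects S := by
  intro p hp
  obtain ⟨h₀, h₁⟩ := hg p hp
  simp only [AffineMap.coe_sub, AffineMap.coe_const, Pi.sub_apply, Function.const_apply]
  constructor <;> linarith

end Effects

theorem coexistent_iff_three_effects_general
    {V : Type*} [NormedAddCommGroup V] [NormedSpace ℝ V]
    (S : Set V)
    (E : Set (V →ᵃ[ℝ] ℝ))
    (hE : E = {f : V →ᵃ[ℝ] ℝ | ∀ ω ∈ S, 0 ≤ f ω ∧ f ω ≤ 1})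
    (u : V →ᵃ[ℝ] ℝ) (hu : u = AffineMap.const ℝ V (1 : ℝ))
    (e f : V →ᵃ[ℝ] ℝ) :
    (∃ (n : ℕ) (G : Fin n → (V →ᵃ[ℝ] ℝ)),
        (∀ i, G i ∈ E) ∧ (∑ i, G i) = u ∧
        ∃ Ie If : Finset (Fin n),
          e = ∑ i ∈ Ie, G i ∧ f = ∑ i ∈ If, G i)
    ↔ (∃ g₁ g₂ g₃, g₁ ∈ E ∧ g₂ ∈ E ∧ g₃ ∈ E ∧
        g₁ + g₂ = e ∧ g₁ + g₃ = f ∧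
        ∀ ω ∈ S, (g₁ + g₂ + g₃) ω ≤ u ω) := by
  obtain rfl : E = effects S := hE
  subst hu
  classical
  constructor
  · rintro ⟨n, G, hG, hsum, Ie, If, rfl, rfl⟩
    have hpart := sum_mem_effects_of_sum_eq_one hG hsum
    refine ⟨∑ i ∈ Ie ∩ If, G i, ∑ i ∈ Ie \ If, G i, ∑ i ∈ If \ Ie, G i, hpart _, hpart _,
      hpart _, sum_inter_add_sum_sdiff _ _ _, by rw [inter_comm, sum_inter_add_sum_sdiff],
      fun p hp => ?_⟩
    rw [sum_inter_add_sum_sdiff_add_sum_sdiff]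
    exact (hpart _ p hp).2
  · rintro ⟨g₁, g₂, g₃, h₁, h₂, h₃, rfl, rfl, hle⟩
    have h₁₂₃ : g₁ + g₂ + g₃ ∈ effects S := fun p hp =>
      ⟨by simp only [AffineMap.coe_add, Pi.add_apply]
          linarith [(h₁ p hp).1, (h₂ p hp).1, (h₃ p hp).1], hle p hp⟩
    have hr := const_one_sub_mem_effects h₁₂₃
    refine ⟨4, ![g₁, g₂, g₃, AffineMap.const ℝ V 1 - (g₁ + g₂ + g₃)], ?_, ?_, {0, 1}, {0, 2},
      ?_, ?_⟩
    · intro i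
      fin_cases i <;> assumption
    · simp [Fin.sum_univ_four]
    · simp
    · simp

/-- `e` and `f` are coexistent (obtainable from a single observable)
iff there are effects `g₁ g₂ g₃` with `g₁+g₂ = e`, `g₁+g₃ = f`, `g₁+g₂+g₃ ≤ u`. -/
theorem coexistent_iff_three_effects
    {V : Type*} [NormedAddCommGroup V] [NormedSpace ℝ V] [FiniteDimensional ℝ V]
    (S : Set V) (hS : IsCompact S) (hconv : Convex ℝ S)
    (E : Set (V →ᵃ[ℝ] ℝ))
    (hE : E = {f : V →ᵃ[ℝ] ℝ | ∀ ω ∈ S, 0 ≤ f ω ∧ f ω ≤ 1})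
    (u : V →ᵃ[ℝ] ℝ) (hu : u = AffineMap.const ℝ V (1 : ℝ))
    (e f : V →ᵃ[ℝ] ℝ) (he : e ∈ E) (hf : f ∈ E) :
    (∃ (n : ℕ) (G : Fin n → (V →ᵃ[ℝ] ℝ)),
        (∀ i, G i ∈ E) ∧ (∑ i, G i) = u ∧
        ∃ Ie If : Finset (Fin n),
          e = ∑ i ∈ Ie, G i ∧ f = ∑ i ∈ If, G i)
    ↔ (∃ g₁ g₂ g₃, g₁ ∈ E ∧ g₂ ∈ E ∧ g₃ ∈ E ∧
        g₁ + g₂ = e ∧ g₁ + g₃ = f ∧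
        ∀ ω ∈ S, (g₁ + g₂ + g₃) ω ≤ u ω) :=
  coexistent_iff_three_effects_general S E hE u hu e f
end

section
/- If K ⊆ ℝ^{d-1} is point symmetric (s ∈ K ⟹ -s ∈ K), then every extremal effect e = (𝐞, e^d) of the effect space E other than o and u satisfies e^d = 1/2. -/
/-!
Symmetry of `K` gives `|e.1 ⬝ᵥ s| ≤ min e.2 (1 - e.2)` on `K`, so every value of an effect lies
between `0` and `2 e.2`, and between `2 e.2 - 1` and `1`. If `e.2 < 1/2`, then `e` can therefore be
stretched away from the zero effect `o` to some `t • e ∈ E` with `t > 1`, which puts `e` strictly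
inside the segment from `o` to `t • e`; extremality forces `e = o`. Dually, `e.2 > 1/2` forces
`e = u`.
-/

open Matrix

lemma exists_one_lt_mul_le_one {𝕜 : Type*} [Field 𝕜] [LinearOrder 𝕜] [IsStrictOrderedRing 𝕜]
    {a : 𝕜} (ha : a < 1) : ∃ t : 𝕜, 1 < t ∧ t * a ≤ 1 := by
  have hpos : 0 < max a 2⁻¹ := lt_max_of_lt_right (by norm_num)
  refine ⟨(max a 2⁻¹)⁻¹, (one_lt_inv₀ hpos).2 (max_lt ha (by norm_num)), ?_⟩
  calc (max a 2⁻¹)⁻¹ * a ≤ (max a 2⁻¹)⁻¹ * max a 2⁻¹ := by gcongr; exact le_max_left _ _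
    _ = 1 := inv_mul_cancel₀ hpos.ne'

lemma eq_of_mem_extremePoints_of_lineMap_mem {𝕜 E : Type*} [Field 𝕜] [LinearOrder 𝕜]
    [IsStrictOrderedRing 𝕜] [AddCommGroup E] [Module 𝕜 E] {A : Set E} {x p : E}
    (hx : x ∈ A.extremePoints 𝕜) (hp : p ∈ A) {t : 𝕜} (ht : 1 < t)
    (hxt : AffineMap.lineMap p x t ∈ A) : x = p := by
  have hseg : x ∈ openSegment 𝕜 p (AffineMap.lineMap p x t) := by
    have := lineMap_mem_openSegment 𝕜 p (AffineMap.lineMap p x t)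
      ⟨inv_pos.2 (zero_lt_one.trans ht), inv_lt_one_of_one_lt₀ ht⟩
    rwa [AffineMap.lineMap_lineMap_right, inv_mul_cancel₀ (zero_lt_one.trans ht).ne',
      AffineMap.lineMap_apply_one] at this
  exact (hx.2 hp hxt hseg).symm

section EffectSpace

variable {n : Type*} [Fintype n] {K : Set (n → ℝ)} {e : (n → ℝ) × ℝ}

/-- The pair `e` encodes the affine functional `s ↦ e.1 ⬝ᵥ s + e.2` on the states `K × {1}`. -/
def effectSpace (K : Set (n → ℝ)) : Set ((n → ℝ) × ℝ) :=
  {e | ∀ s ∈ K, 0 ≤ e.1 ⬝ᵥ s + e.2 ∧ e.1 ⬝ᵥ s + e.2 ≤ 1}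

lemma zero_mem_effectSpace : (0 : (n → ℝ) × ℝ) ∈ effectSpace K := by
  intro s _
  simp

lemma unit_mem_effectSpace : ((0 : n → ℝ), (1 : ℝ)) ∈ effectSpace K := by
  intro s _
  simp

lemma unit_sub_mem_effectSpace (he : e ∈ effectSpace K) :
    ((0 : n → ℝ), (1 : ℝ)) - e ∈ effectSpace K := by
  intro s hs
  obtain ⟨h₀, h₁⟩ := he s hs
  simp only [Prod.fst_sub, Prod.snd_sub, sub_dotProduct, zero_dotProduct]
  constructor <;> linarith

lemma dotProduct_le_snd_of_mem_effectSpace (hsym : ∀ s ∈ K, -s ∈ K) (he : e ∈ effectSpace K)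
    {s : n → ℝ} (hs : s ∈ K) : e.1 ⬝ᵥ s ≤ e.2 := by
  have := (he (-s) (hsym s hs)).1
  rw [dotProduct_neg] at this
  linarith

lemma smul_mem_effectSpace (hsym : ∀ s ∈ K, -s ∈ K) (he : e ∈ effectSpace K) {t : ℝ}
    (ht₀ : 0 ≤ t) (ht : t * (2 * e.2) ≤ 1) : t • e ∈ effectSpace K := by
  intro s hs
  have h₀ := (he s hs).1
  have hle : e.1 ⬝ᵥ s + e.2 ≤ 2 * e.2 := by
    linarith [dotProduct_le_snd_of_mem_effectSpace hsym he hs]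
  simp only [Prod.smul_fst, Prod.smul_snd, smul_dotProduct, smul_eq_mul, ← mul_add]
  exact ⟨mul_nonneg ht₀ h₀, (mul_le_mul_of_nonneg_left hle ht₀).trans ht⟩

end EffectSpace

theorem extreme_effect_on_half_hyperplane_general
    {m : ℕ} (K : Set (Fin m → ℝ)) (hsym : ∀ s ∈ K, -s ∈ K)
    (E : Set ((Fin m → ℝ) × ℝ))
    (hE : E = {e : (Fin m → ℝ) × ℝ | ∀ s ∈ K, 0 ≤ e.1 ⬝ᵥ s + e.2 ∧ e.1 ⬝ᵥ s + e.2 ≤ 1})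
    (e : (Fin m → ℝ) × ℝ) (he : e ∈ Set.extremePoints ℝ E)
    (ho : e ≠ ((0 : Fin m → ℝ), (0 : ℝ))) (hu : e ≠ ((0 : Fin m → ℝ), (1 : ℝ))) :
    e.2 = 1/2 := by
  change E = effectSpace K at hE
  subst hE
  rcases lt_trichotomy e.2 (1/2) with hlt | heq | hgt
  · obtain ⟨t, ht, hte⟩ := exists_one_lt_mul_le_one (a := 2 * e.2) (by linarith)
    refine absurd (eq_of_mem_extremePoints_of_lineMap_mem he zero_mem_effectSpace ht ?_) ho
    simpa [AffineMap.lineMap_apply_module'] using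
      smul_mem_effectSpace hsym he.1 (zero_le_one.trans ht.le) hte
  · exact heq
  · obtain ⟨t, ht, hte⟩ := exists_one_lt_mul_le_one (a := 2 * (1 - e.2)) (by linarith)
    refine absurd (eq_of_mem_extremePoints_of_lineMap_mem he unit_mem_effectSpace ht ?_) hu
    have hline : AffineMap.lineMap ((0 : Fin m → ℝ), (1 : ℝ)) e t
        = ((0 : Fin m → ℝ), (1 : ℝ)) - t • (((0 : Fin m → ℝ), (1 : ℝ)) - e) := by
      rw [AffineMap.lineMap_apply_module']
      module
    rw [hline]
    refine unit_sub_mem_effectSpace (smul_mem_effectSpace hsym (unit_sub_mem_effectSpace he.1)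
      (zero_le_one.trans ht.le) ?_)
    simpa using hte

/-- If `K` is point symmetric, every nontrivial extremal effect lies
on the hyperplane `e.2 = 1/2`. -/
theorem extreme_effect_on_half_hyperplane
    {m : ℕ} (K : Set (Fin m → ℝ)) (hK : IsCompact K) (hconv : Convex ℝ K)
    (hne : K.Nonempty) (hsym : ∀ s ∈ K, -s ∈ K)
    (E : Set ((Fin m → ℝ) × ℝ))
    (hE : E = {e : (Fin m → ℝ) × ℝ | ∀ s ∈ K, 0 ≤ e.1 ⬝ᵥ s + e.2 ∧ e.1 ⬝ᵥ s + e.2 ≤ 1})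
    (e : (Fin m → ℝ) × ℝ) (he : e ∈ Set.extremePoints ℝ E)
    (ho : e ≠ ((0 : Fin m → ℝ), (0 : ℝ))) (hu : e ≠ ((0 : Fin m → ℝ), (1 : ℝ))) :
    e.2 = 1/2 :=
  extreme_effect_on_half_hyperplane_general K hsym E hE e he ho hu
end

section
/- For qubit unbiased effects e(λ) = (1/2)(I + λ·σ) with ‖λ‖ ≤ 1, if (1/2)‖λ₁ + λ₂‖ + (1/2)‖λ₁ − λ₂‖ ≤ 1, then there exist positive semidefinite operators g₁, g₂, g₃ with g₁+g₂ = e(λ₁), g₁+g₃ = e(λ₂), and g₁+g₂+g₃ ≤ I. -/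
open Matrix ComplexOrder

noncomputable def sigmaX : Matrix (Fin 2) (Fin 2) ℂ := !![0, 1; 1, 0]
noncomputable def sigmaY : Matrix (Fin 2) (Fin 2) ℂ := !![0, -Complex.I; Complex.I, 0]
noncomputable def sigmaZ : Matrix (Fin 2) (Fin 2) ℂ := !![1, 0; 0, -1]

/-- The unbiased qubit effect `e(λ) = (1/2)(I + λ·σ)`. -/
noncomputable def unbiasedEffect (l : EuclideanSpace ℝ (Fin 3)) : Matrix (Fin 2) (Fin 2) ℂ :=
  (1/2 : ℂ) • ((1 : Matrix (Fin 2) (Fin 2) ℂ)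
    + (l 0 : ℂ) • sigmaX + (l 1 : ℂ) • sigmaY + (l 2 : ℂ) • sigmaZ)

noncomputable def eff (c m0 m1 m2 : ℝ) : Matrix (Fin 2) (Fin 2) ℂ :=
  (c:ℂ) • 1 + (m0:ℂ) • sigmaX + (m1:ℂ) • sigmaY + (m2:ℂ) • sigmaZ

lemma eff_eq (c m0 m1 m2 : ℝ) :
    eff c m0 m1 m2 = !![(c:ℂ)+m2, m0 - m1*Complex.I; m0 + m1*Complex.I, c - m2] := by
  unfold eff sigmaX sigmaY sigmaZ
  ext i j
  fin_cases i <;> fin_cases j <;> simp [Matrix.one_apply] <;> ring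

lemma eff_herm (c m0 m1 m2 : ℝ) : (eff c m0 m1 m2).IsHermitian := by
  rw [eff_eq]
  ext i j
  fin_cases i <;> fin_cases j <;>
    simp [Matrix.conjTranspose_apply, Complex.ext_iff]

lemma eff_sq (n m0 m1 m2 : ℝ) (hn2 : n^2 = m0^2+m1^2+m2^2) :
    eff n m0 m1 m2 * eff n m0 m1 m2 = ((2*n : ℝ) : ℂ) • eff n m0 m1 m2 := by
  have hc : (n:ℂ)^2 = (m0:ℂ)^2+(m1:ℂ)^2+(m2:ℂ)^2 := by exact_mod_cast hn2
  rw [eff_eq]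
  ext i j
  fin_cases i <;> fin_cases j <;>
    simp [Matrix.mul_apply, Fin.sum_univ_two] <;>
    first
      | ring1
      | linear_combination hc
      | linear_combination -hc
      | linear_combination hc + (m1:ℂ)^2 * Complex.I_sq
      | linear_combination hc - (m1:ℂ)^2 * Complex.I_sq
      | linear_combination -hc + (m1:ℂ)^2 * Complex.I_sq
      | linear_combination -hc - (m1:ℂ)^2 * Complex.I_sq

lemma psd_smul {M : Matrix (Fin 2) (Fin 2) ℂ} (hM : M.PosSemidef) {c : ℝ} (hc : 0 ≤ c) :
    ((c:ℂ) • M).PosSemidef := by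
  refine ⟨?_, fun x => ?_⟩
  · rw [Matrix.IsHermitian, Matrix.conjTranspose_smul, hM.1.eq]
    simp
  · exact (hM.smul (Complex.zero_le_real.2 hc)).2 x

lemma eff_posSemidef (c m0 m1 m2 : ℝ) (hc : 0 ≤ c) (hle : m0^2+m1^2+m2^2 ≤ c^2) :
    (eff c m0 m1 m2).PosSemidef := by
  set n := Real.sqrt (m0^2+m1^2+m2^2) with hn
  have hsum : 0 ≤ m0^2+m1^2+m2^2 := by positivity
  have hn0 : 0 ≤ n := Real.sqrt_nonneg _
  have hn2 : n^2 = m0^2+m1^2+m2^2 := Real.sq_sqrt hsum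
  have hnc : n ≤ c := by nlinarith
  have hA : (eff n m0 m1 m2).PosSemidef := by
    rcases eq_or_lt_of_le hn0 with h0 | h0
    · have : m0 = 0 ∧ m1 = 0 ∧ m2 = 0 := by
        refine ⟨?_, ?_, ?_⟩ <;> nlinarith [sq_nonneg m0, sq_nonneg m1, sq_nonneg m2]
      obtain ⟨e0, e1, e2⟩ := this
      have : eff n m0 m1 m2 = 0 := by
        rw [← h0, e0, e1, e2]; unfold eff; simp
      rw [this]; exact Matrix.PosSemidef.zero
    · have key : eff n m0 m1 m2
          = ((1/(2*n) : ℝ) : ℂ) • ((eff n m0 m1 m2)ᴴ * eff n m0 m1 m2) := by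
        rw [(eff_herm n m0 m1 m2).eq, eff_sq n m0 m1 m2 hn2, smul_smul]
        rw [← Complex.ofReal_mul]
        rw [show (1/(2*n)) * (2*n) = 1 by field_simp]
        simp
      rw [key]
      exact psd_smul (Matrix.posSemidef_conjTranspose_mul_self _) (by positivity)
  have key : eff c m0 m1 m2 = ((c - n : ℝ) : ℂ) • 1 + eff n m0 m1 m2 := by
    unfold eff; push_cast; module
  rw [key]
  exact ((psd_smul Matrix.PosSemidef.one (by linarith))).add hA

lemma euc_norm_sq (v : EuclideanSpace ℝ (Fin 3)) :
    ‖v‖^2 = (v 0)^2 + (v 1)^2 + (v 2)^2 := by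
  rw [EuclideanSpace.norm_eq, Real.sq_sqrt (by positivity)]
  simp [Fin.sum_univ_three, sq_abs]

/-- 'if' direction of Busch's theorem: if
`(1/2)‖λ₁+λ₂‖ + (1/2)‖λ₁-λ₂‖ ≤ 1`, then `e(λ₁)` and `e(λ₂)` are coexistent. -/
theorem busch_if_direction (l₁ l₂ : EuclideanSpace ℝ (Fin 3))
    (h₁ : ‖l₁‖ ≤ 1) (h₂ : ‖l₂‖ ≤ 1)
    (h : (1/2) * ‖l₁ + l₂‖ + (1/2) * ‖l₁ - l₂‖ ≤ 1) :
    ∃ g₁ g₂ g₃ : Matrix (Fin 2) (Fin 2) ℂ,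
      g₁.PosSemidef ∧ g₂.PosSemidef ∧ g₃.PosSemidef ∧
      g₁ + g₂ = unbiasedEffect l₁ ∧ g₁ + g₃ = unbiasedEffect l₂ ∧
      ((1 : Matrix (Fin 2) (Fin 2) ℂ) - (g₁ + g₂ + g₃)).PosSemidef := by
  set b : ℝ := (1/2) * ‖l₁ - l₂‖ with hb
  have hx0 : 0 ≤ ‖l₁ + l₂‖ := norm_nonneg _
  have hy0 : 0 ≤ ‖l₁ - l₂‖ := norm_nonneg _
  have hb0 : 0 ≤ b := by positivity
  have hb1 : b ≤ 1 := by simp only [hb]; linarith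
  have e1 : ‖l₁ + l₂‖^2 = (l₁ 0 + l₂ 0)^2 + (l₁ 1 + l₂ 1)^2 + (l₁ 2 + l₂ 2)^2 := by
    rw [euc_norm_sq]; simp
  have e2 : ‖l₁ - l₂‖^2 = (l₁ 0 - l₂ 0)^2 + (l₁ 1 - l₂ 1)^2 + (l₁ 2 - l₂ 2)^2 := by
    rw [euc_norm_sq]; simp
  refine ⟨eff ((1-b)/2) ((l₁ 0 + l₂ 0)/4) ((l₁ 1 + l₂ 1)/4) ((l₁ 2 + l₂ 2)/4),
          eff (b/2) ((l₁ 0 - l₂ 0)/4) ((l₁ 1 - l₂ 1)/4) ((l₁ 2 - l₂ 2)/4),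
          eff (b/2) (-((l₁ 0 - l₂ 0)/4)) (-((l₁ 1 - l₂ 1)/4)) (-((l₁ 2 - l₂ 2)/4)),
          ?_, ?_, ?_, ?_, ?_, ?_⟩
  · exact eff_posSemidef _ _ _ _ (by linarith) (by nlinarith)
  · exact eff_posSemidef _ _ _ _ (by linarith) (by nlinarith)
  · exact eff_posSemidef _ _ _ _ (by linarith) (by nlinarith)
  · unfold eff unbiasedEffect; push_cast; module
  · unfold eff unbiasedEffect; push_cast; module
  · have key : (1 : Matrix (Fin 2) (Fin 2) ℂ)
        - (eff ((1-b)/2) ((l₁ 0 + l₂ 0)/4) ((l₁ 1 + l₂ 1)/4) ((l₁ 2 + l₂ 2)/4)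
          + eff (b/2) ((l₁ 0 - l₂ 0)/4) ((l₁ 1 - l₂ 1)/4) ((l₁ 2 - l₂ 2)/4)
          + eff (b/2) (-((l₁ 0 - l₂ 0)/4)) (-((l₁ 1 - l₂ 1)/4)) (-((l₁ 2 - l₂ 2)/4)))
        = eff ((1-b)/2) (-((l₁ 0 + l₂ 0)/4)) (-((l₁ 1 + l₂ 1)/4)) (-((l₁ 2 + l₂ 2)/4)) := by
      unfold eff; push_cast; module
    rw [key]
    exact eff_posSemidef _ _ _ _ (by linarith) (by nlinarith)
end

section
/- An effect f is coexistent with an effect e if and only if f can be written as f = g₁ + g₃ where g₁ is in the lower set of e (o ≤ g₁ ≤ e) and g₃ is in the lower set of ē = u - e; i.e., the set of effects coexistent with e equals the Minkowski sum of the lower sets of e and ē, intersected with E. -/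
/-! Writing `g₂ = e - g₁`, the coexistence conditions on `g₂` and on `g₁ + g₂ + g₃` become
`g₁ ≤ e` and `g₃ ≤ u - e`, since `g₁ + g₂ + g₃ = e + g₃`. -/

namespace Effect

variable {V : Type*} [AddCommGroup V] [Module ℝ V] (S : Set V)

def effects : Set (V →ᵃ[ℝ] ℝ) :=
  {f | ∀ ω ∈ S, 0 ≤ f ω ∧ f ω ≤ 1}

variable {S}

theorem sub_mem_effects_iff {e g : V →ᵃ[ℝ] ℝ} (he : e ∈ effects S) (hg : g ∈ effects S) :
    e - g ∈ effects S ↔ ∀ ω ∈ S, g ω ≤ e ω := by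
  simp only [effects, Set.mem_ofPred_eq, AffineMap.coe_sub, Pi.sub_apply, sub_nonneg] at he hg ⊢
  refine ⟨fun h ω hω => (h ω hω).1, fun h ω hω => ⟨h ω hω, ?_⟩⟩
  linarith [(he ω hω).2, (hg ω hω).1]

theorem add_le_const_one_iff {e g : V →ᵃ[ℝ] ℝ} :
    (∀ ω ∈ S, (e + g) ω ≤ AffineMap.const ℝ V (1 : ℝ) ω) ↔
      ∀ ω ∈ S, g ω ≤ (AffineMap.const ℝ V (1 : ℝ) - e) ω := by
  simp only [AffineMap.coe_add, AffineMap.coe_sub, Pi.add_apply, Pi.sub_apply,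
    AffineMap.const_apply, le_sub_iff_add_le']

end Effect

theorem coexistent_iff_mem_minkowski_sum_of_lower_sets_general
    {V : Type*} [NormedAddCommGroup V] [NormedSpace ℝ V]
    (S : Set V)
    (E : Set (V →ᵃ[ℝ] ℝ))
    (hE : E = {f : V →ᵃ[ℝ] ℝ | ∀ ω ∈ S, 0 ≤ f ω ∧ f ω ≤ 1})
    (u : V →ᵃ[ℝ] ℝ) (hu : u = AffineMap.const ℝ V (1 : ℝ))
    (e f : V →ᵃ[ℝ] ℝ) (he : e ∈ E) :
    (∃ g₁ g₂ g₃, g₁ ∈ E ∧ g₂ ∈ E ∧ g₃ ∈ E ∧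
        g₁ + g₂ = e ∧ g₁ + g₃ = f ∧ ∀ ω ∈ S, (g₁ + g₂ + g₃) ω ≤ u ω)
    ↔ (∃ g₁ g₃,
        (g₁ ∈ E ∧ ∀ ω ∈ S, g₁ ω ≤ e ω) ∧
        (g₃ ∈ E ∧ ∀ ω ∈ S, g₃ ω ≤ (u - e) ω) ∧
        f = g₁ + g₃) := by
  change E = Effect.effects S at hE
  subst hE hu
  constructor
  · rintro ⟨g₁, g₂, g₃, hg₁, hg₂, hg₃, hsum, rfl, hle⟩
    obtain rfl : g₂ = e - g₁ := eq_sub_of_add_eq' hsum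
    rw [add_sub_cancel] at hle
    exact ⟨g₁, g₃, ⟨hg₁, (Effect.sub_mem_effects_iff he hg₁).1 hg₂⟩,
      ⟨hg₃, Effect.add_le_const_one_iff.1 hle⟩, rfl⟩
  · rintro ⟨g₁, g₃, ⟨hg₁, hg₁e⟩, ⟨hg₃, hg₃e⟩, rfl⟩
    refine ⟨g₁, e - g₁, g₃, hg₁, (Effect.sub_mem_effects_iff he hg₁).2 hg₁e, hg₃,
      add_sub_cancel g₁ e, rfl, ?_⟩
    rw [add_sub_cancel]
    exact Effect.add_le_const_one_iff.2 hg₃e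

/-- `f` is coexistent with `e` iff `f = g₁ + g₃` with `g₁` in the lower
set of `e` and `g₃` in the lower set of `ē = u - e`. -/
theorem coexistent_iff_mem_minkowski_sum_of_lower_sets
    {V : Type*} [NormedAddCommGroup V] [NormedSpace ℝ V] [FiniteDimensional ℝ V]
    (S : Set V) (hS : IsCompact S) (hconv : Convex ℝ S)
    (E : Set (V →ᵃ[ℝ] ℝ))
    (hE : E = {f : V →ᵃ[ℝ] ℝ | ∀ ω ∈ S, 0 ≤ f ω ∧ f ω ≤ 1})
    (u : V →ᵃ[ℝ] ℝ) (hu : u = AffineMap.const ℝ V (1 : ℝ))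
    (e f : V →ᵃ[ℝ] ℝ) (he : e ∈ E) (hf : f ∈ E) :
    (∃ g₁ g₂ g₃, g₁ ∈ E ∧ g₂ ∈ E ∧ g₃ ∈ E ∧
        g₁ + g₂ = e ∧ g₁ + g₃ = f ∧ ∀ ω ∈ S, (g₁ + g₂ + g₃) ω ≤ u ω)
    ↔ (∃ g₁ g₃,
        (g₁ ∈ E ∧ ∀ ω ∈ S, g₁ ω ≤ e ω) ∧
        (g₃ ∈ E ∧ ∀ ω ∈ S, g₃ ω ≤ (u - e) ω) ∧
        f = g₁ + g₃) :=
  coexistent_iff_mem_minkowski_sum_of_lower_sets_general S E hE u hu e f he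
end
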